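/- Let P be a poset and F : P → Ab a functor (a cellular cosheaf). Define a precosheaf F̂ on the Alexandroff space X(P) by F̂(U) = colim over x ∈ U of F(x), where U is regarded as a full subposet of P. Then F̂ is a cosheaf: for every open set U and every open cover 𝒰 of U, the natural map colim over the nerve N(𝒰) of F̂ to F̂(U) is an isomorphism. -/

import Mathlib

open CategoryTheory CategoryTheory.Limits TopologicalSpace



/-- The minimal open set containing `x`. -/
def minOpen {X : Type} [TopologicalSpace X] (x : X) : Set X :=
  ⋂₀ {U : Set X | IsOpen U ∧ x ∈ U}

lemma isOpen_minOpen {X : Type} [TopologicalSpace X] [AlexandrovDiscrete X] (x : X) :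
    IsOpen (minOpen x) :=
  isOpen_sInter fun _ h => h.1

/-- The minimal open set containing `x`, as an element of `Opens X`. -/
def Uo {X : Type} [TopologicalSpace X] [AlexandrovDiscrete X] (x : X) : Opens X :=
  ⟨minOpen x, isOpen_minOpen x⟩

lemma minOpen_le {X : Type} [TopologicalSpace X] {x : X} {U : Opens X} (hx : x ∈ U) :
    minOpen x ⊆ (U : Set X) :=
  Set.sInter_subset_of_mem ⟨U.isOpen, hx⟩

/-- A precosheaf of abelian groups on `X`: a covariant functor on open sets. -/
abbrev Precosheaf (X : Type) [TopologicalSpace X] := Opens X ⥤ AddCommGrpCat.{0}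

variable {X : Type} [TopologicalSpace X]

/-- The nerve of an open cover: the nonempty finite intersections of its members. -/
def nerveSet (𝒰 : Set (Opens X)) : Set (Opens X) :=
  {V | (V : Set X).Nonempty ∧ ∃ s : Finset (Opens X), ↑s ⊆ 𝒰 ∧ s.Nonempty ∧ V = s.inf id}

lemma nerve_le {𝒰 : Set (Opens X)} {U : Opens X} (h : ∀ V ∈ 𝒰, V ≤ U)
    {V : Opens X} (hV : V ∈ nerveSet 𝒰) : V ≤ U := by
  obtain ⟨-, s, hs, ⟨w, hw⟩, rfl⟩ := hV
  exact le_trans (Finset.inf_le hw) (h w (hs hw))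

/-- The diagram of a precosheaf over the nerve of an open cover. -/
def nerveDiagram (F : Precosheaf X) (𝒰 : Set (Opens X)) :
    ObjectProperty.FullSubcategory (· ∈ nerveSet 𝒰) ⥤ AddCommGrpCat.{0} :=
  ObjectProperty.ι (· ∈ nerveSet 𝒰) ⋙ F

/-- The canonical cocone on the nerve diagram with apex `F(U)`. -/
def coverCocone (F : Precosheaf X) (U : Opens X) (𝒰 : Set (Opens X))
    (h : ∀ V ∈ 𝒰, V ≤ U) : Cocone (nerveDiagram F 𝒰) where
  pt := F.obj U
  ι :=
    { app := fun V => F.map (homOfLE (nerve_le h V.2))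
      naturality := fun a b f => by
        dsimp [nerveDiagram]
        rw [Category.comp_id, ← F.map_comp]
        rfl }

/-- A precosheaf is a cosheaf if for every open `U` and every open cover `𝒰` of `U`, the
canonical map from the colimit over the nerve of `𝒰` to `F(U)` is an isomorphism, i.e.
`F(U)` is the colimit of the nerve diagram. -/
def IsCosheaf (F : Precosheaf X) : Prop :=
  ∀ (U : Opens X) (𝒰 : Set (Opens X)) (h𝒰 : ∀ V ∈ 𝒰, V ≤ U), U ≤ sSup 𝒰 →
    Nonempty (IsColimit (coverCocone F U 𝒰 h𝒰))

/-- The Alexandroff space `X(P)` of a poset `P`: open sets are the up-sets. -/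
def upTop (P : Type) [Preorder P] : TopologicalSpace P where
  IsOpen := IsUpperSet
  isOpen_univ := isUpperSet_univ
  isOpen_inter _ _ := IsUpperSet.inter
  isOpen_sUnion _ h := isUpperSet_sUnion h

variable {P : Type} [PartialOrder P]

/-- The diagram of a cellular cosheaf `F : P ⥤ Ab` over the subposet `U ⊆ P`. -/
def openDiagram (F : P ⥤ AddCommGrpCat.{0}) (U : Set P) :
    ObjectProperty.FullSubcategory (· ∈ U) ⥤ AddCommGrpCat.{0} :=
  ObjectProperty.ι (· ∈ U) ⋙ F

noncomputable def hatMap (F : P ⥤ AddCommGrpCat.{0}) {U V : Set P} (h : U ⊆ V) :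
    colimit (openDiagram F U) ⟶ colimit (openDiagram F V) :=
  colimit.pre (openDiagram F V) (ObjectProperty.ιOfLE fun _ hx => h hx)

lemma hatMap_ι (F : P ⥤ AddCommGrpCat.{0}) {U V : Set P} (h : U ⊆ V)
    (j : ObjectProperty.FullSubcategory (· ∈ U)) :
    colimit.ι (openDiagram F U) j ≫ hatMap F h =
      colimit.ι (openDiagram F V) ⟨j.1, h j.2⟩ := by
  exact colimit.ι_pre (openDiagram F V) (ObjectProperty.ιOfLE fun _ hx => h hx) j

/-- The cosheaf `F̂` on `X(P)` associated to a cellular cosheaf `F : P ⥤ Ab`,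
with `F̂(U) = colim_{x ∈ U} F(x)`. -/
noncomputable def hatF (F : P ⥤ AddCommGrpCat.{0}) :
    @TopologicalSpace.Opens P (upTop P) ⥤ AddCommGrpCat.{0} where
  obj U := colimit (openDiagram F (U : Set P))
  map {U V} h := hatMap F h.le
  map_id U := by
    apply colimit.hom_ext
    intro j
    refine (hatMap_ι F (fun _ hx => hx) j).trans ?_
    simp
  map_comp {U V W} f g := by
    apply colimit.hom_ext
    intro j
    have hUV : (U : Set P) ⊆ V := f.le
    have hVW : (V : Set P) ⊆ W := g.le
    refine (hatMap_ι F (hUV.trans hVW) j).trans ?_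
    refine (hatMap_ι F hVW ⟨j.1, hUV j.2⟩).symm.trans ?_
    rw [← hatMap_ι F hUV j]
    exact Category.assoc _ _ _

/-! A cocone `c` under the nerve diagram of `F̂` gives, for each `x ∈ U`, a map `F(x) ⟶ c.pt`
through any member of the nerve containing `x`; it does not depend on that member, since two
of them meet in a member of the nerve that still contains `x`. These maps form a cocone under
`F` restricted to `U`, that is a map `F̂(U) ⟶ c.pt`, and it is the unique factorization of `c`. -/

section Nerve

variable {𝒰 : Set (Opens X)}

lemma mem_nerveSet_of_mem {W : Opens X} (hW : W ∈ 𝒰) (hne : (W : Set X).Nonempty) :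
    W ∈ nerveSet 𝒰 :=
  ⟨hne, {W}, by simpa using hW, Finset.singleton_nonempty W, by simp⟩

lemma inf_mem_nerveSet [DecidableEq (Opens X)] {V W : Opens X} (hV : V ∈ nerveSet 𝒰)
    (hW : W ∈ nerveSet 𝒰) (hne : ((V ⊓ W : Opens X) : Set X).Nonempty) :
    V ⊓ W ∈ nerveSet 𝒰 := by
  obtain ⟨-, s, hs𝒰, hs, rfl⟩ := hV
  obtain ⟨-, t, ht𝒰, -, rfl⟩ := hW
  exact ⟨hne, s ∪ t, by simpa using And.intro hs𝒰 ht𝒰, hs.mono Finset.subset_union_left,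
    Finset.inf_union.symm⟩

noncomputable def nerveObjOfMem {U : Opens X} (hcov : U ≤ sSup 𝒰) {x : X} (hx : x ∈ U) :
    ObjectProperty.FullSubcategory (· ∈ nerveSet 𝒰) :=
  have hex := Opens.mem_sSup.mp (hcov hx)
  ⟨hex.choose, mem_nerveSet_of_mem hex.choose_spec.1 ⟨x, hex.choose_spec.2⟩⟩

lemma mem_nerveObjOfMem {U : Opens X} (hcov : U ≤ sSup 𝒰) {x : X} (hx : x ∈ U) :
    x ∈ (nerveObjOfMem hcov hx).obj :=
  (Opens.mem_sSup.mp (hcov hx)).choose_spec.2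

end Nerve

section HatF

attribute [local instance] upTop

variable (F : P ⥤ AddCommGrpCat.{0}) {𝒰 : Set (Opens P)}

lemma hatF_map_ι {V W : Opens P} (f : V ⟶ W)
    (j : ObjectProperty.FullSubcategory (· ∈ (V : Set P))) :
    colimit.ι (openDiagram F V) j ≫ (hatF F).map f = colimit.ι (openDiagram F W) ⟨j.1, f.le j.2⟩ :=
  hatMap_ι F f.le j

lemma colimit_ι_comp_cocone_ι_eq (c : Cocone (nerveDiagram (hatF F) 𝒰)) {x : P}
    (V₁ V₂ : ObjectProperty.FullSubcategory (· ∈ nerveSet 𝒰)) (h₁ : x ∈ V₁.obj)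
    (h₂ : x ∈ V₂.obj) :
    colimit.ι (openDiagram F V₁.obj) ⟨x, h₁⟩ ≫ c.ι.app V₁ =
      colimit.ι (openDiagram F V₂.obj) ⟨x, h₂⟩ ≫ c.ι.app V₂ := by
  classical
  have hx : x ∈ V₁.obj ⊓ V₂.obj := ⟨h₁, h₂⟩
  let V : ObjectProperty.FullSubcategory (· ∈ nerveSet 𝒰) :=
    ⟨V₁.obj ⊓ V₂.obj, inf_mem_nerveSet V₁.property V₂.property ⟨x, hx⟩⟩
  have through_inf : ∀ (Vᵢ : ObjectProperty.FullSubcategory (· ∈ nerveSet 𝒰)) (f : V ⟶ Vᵢ)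
      (hᵢ : x ∈ Vᵢ.obj), colimit.ι (openDiagram F Vᵢ.obj) ⟨x, hᵢ⟩ ≫ c.ι.app Vᵢ =
        colimit.ι (openDiagram F V.obj) ⟨x, hx⟩ ≫ c.ι.app V := by
    intro Vᵢ f hᵢ
    rw [← c.w f]
    exact (congrArg (· ≫ c.ι.app Vᵢ) (hatF_map_ι F f.hom ⟨x, hx⟩).symm).trans
      (Category.assoc _ _ _)
  rw [through_inf V₁ (ObjectProperty.homMk (homOfLE inf_le_left)) h₁,
    through_inf V₂ (ObjectProperty.homMk (homOfLE inf_le_right)) h₂]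

variable {U : Opens P} (hcov : U ≤ sSup 𝒰)

noncomputable def coconeOfCover (c : Cocone (nerveDiagram (hatF F) 𝒰)) :
    Cocone (openDiagram F U) where
  pt := c.pt
  ι :=
    { app := fun j => colimit.ι (openDiagram F (nerveObjOfMem hcov j.2).obj)
          ⟨j.1, mem_nerveObjOfMem hcov j.2⟩ ≫ c.ι.app (nerveObjOfMem hcov j.2)
      naturality := fun j k f => by
        have hk : k.1 ∈ (nerveObjOfMem hcov j.2).obj :=
          (nerveObjOfMem hcov j.2).obj.isOpen (leOfHom f.hom) (mem_nerveObjOfMem hcov j.2)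
        refine (congrArg ((openDiagram F U).map f ≫ ·) (colimit_ι_comp_cocone_ι_eq F c _
          (nerveObjOfMem hcov j.2) (mem_nerveObjOfMem hcov k.2) hk)).trans ?_
        refine (Category.assoc _ _ _).symm.trans ?_
        refine (congrArg (· ≫ c.ι.app (nerveObjOfMem hcov j.2))
          (colimit.w (openDiagram F (nerveObjOfMem hcov j.2).obj)
            (j := ⟨k.1, hk⟩) (j' := ⟨j.1, mem_nerveObjOfMem hcov j.2⟩)
            (ObjectProperty.homMk f.hom))).trans ?_
        exact (Category.comp_id _).symm }

noncomputable def isColimitCoverCocone (h𝒰 : ∀ V ∈ 𝒰, V ≤ U) :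
    IsColimit (coverCocone (hatF F) U 𝒰 h𝒰) where
  desc c := colimit.desc (openDiagram F U) (coconeOfCover F hcov c)
  fac c V := by
    refine colimit.hom_ext fun j => ?_
    refine (Category.assoc _ _ _).symm.trans ?_
    refine ((congrArg (· ≫ _) (hatF_map_ι F (homOfLE (nerve_le h𝒰 V.2)) j)).trans
      (colimit.ι_desc _ _)).trans ?_
    exact colimit_ι_comp_cocone_ι_eq F c _ V _ j.2
  uniq c m hm := by
    refine colimit.hom_ext (F := openDiagram F U) fun j => ?_
    let W := nerveObjOfMem hcov j.2
    refine Eq.trans ?_ (colimit.ι_desc (coconeOfCover F hcov c) j).symm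
    exact (congrArg (· ≫ m)
      (hatF_map_ι F (homOfLE (nerve_le h𝒰 W.2)) ⟨j.1, mem_nerveObjOfMem hcov j.2⟩).symm).trans
      ((Category.assoc _ _ _).trans (congrArg (_ ≫ ·) (hm W)))

end HatF

/-- For a cellular cosheaf `F` over a poset `P`, the associated precosheaf `F̂` on the
Alexandroff space `X(P)` is a cosheaf. -/
theorem stmt_7 (P : Type) [PartialOrder P] (F : P ⥤ AddCommGrpCat.{0}) :
    @IsCosheaf P (upTop P) (hatF F) :=
  fun _ _ h𝒰 hcov => ⟨isColimitCoverCocone F hcov h𝒰⟩
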